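/- arXiv:1209.0827 — 10 statements merged into one kernel-verified Lean document; each statement's English description precedes it below -/
import Mathlib

section
/- For every N ≥ 1, the N×N tridiagonal matrix A_N with -1 on the diagonal and 2 on the off-diagonals is invertible (equivalently, has trivial kernel). -/
/-! `triA N` has integer entries and reduces to the identity modulo 2, so its determinant is an odd
integer, in particular nonzero. -/

/-- The N×N tridiagonal real matrix with -1 on the diagonal and 2 on the
super- and sub-diagonals. -/
def triA (N : ℕ) : Matrix (Fin N) (Fin N) ℝ :=
  Matrix.of fun i j =>
    if (i : ℕ) = (j : ℕ) then -1
    else if (i : ℕ) + 1 = (j : ℕ) ∨ (j : ℕ) + 1 = (i : ℕ) then 2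
    else 0

theorem Matrix.det_map_intCast_ne_zero_of_map_zmod_eq_one {n R : Type*} [Fintype n]
    [DecidableEq n] [CommRing R] [CharZero R] {m : ℕ} (hm : m ≠ 1) {B : Matrix n n ℤ}
    (hB : B.map (Int.cast : ℤ → ZMod m) = 1) : (B.map (Int.cast : ℤ → R)).det ≠ 0 := by
  have : Nontrivial (ZMod m) := ZMod.nontrivial_iff.mpr hm
  have hdet_mod : ((B.det : ℤ) : ZMod m) = 1 := by
    rw [Int.cast_det, hB, Matrix.det_one]
  have hdet : B.det ≠ 0 := fun h => by simp [h] at hdet_mod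
  rw [← Int.cast_det]
  exact_mod_cast hdet

def triAInt (N : ℕ) : Matrix (Fin N) (Fin N) ℤ :=
  Matrix.of fun i j =>
    if (i : ℕ) = (j : ℕ) then -1
    else if (i : ℕ) + 1 = (j : ℕ) ∨ (j : ℕ) + 1 = (i : ℕ) then 2
    else 0

theorem triAInt_map_intCast (N : ℕ) : (triAInt N).map (Int.cast : ℤ → ℝ) = triA N := by
  ext i j
  simp only [Matrix.map_apply, triAInt, triA, Matrix.of_apply]
  split_ifs <;> norm_num

theorem triAInt_map_zmod_two (N : ℕ) : (triAInt N).map (Int.cast : ℤ → ZMod 2) = 1 := by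
  ext i j
  simp only [Matrix.map_apply, triAInt, Matrix.of_apply, Matrix.one_apply, Fin.val_inj]
  split_ifs <;> decide

theorem triA_det_ne_zero (N : ℕ) : (triA N).det ≠ 0 := by
  rw [← triAInt_map_intCast]
  exact Matrix.det_map_intCast_ne_zero_of_map_zmod_eq_one (by decide) (triAInt_map_zmod_two N)

theorem triA_invertible :
    ∀ N : ℕ, 1 ≤ N →
      (triA N).det ≠ 0 ∧ ∀ v : Fin N → ℝ, (triA N).mulVec v = 0 → v = 0 :=
  fun N _ => ⟨triA_det_ne_zero N, fun _ => Matrix.eq_zero_of_mulVec_eq_zero (triA_det_ne_zero N)⟩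
end

section
/- If b : ℝ → ℂ^N solves the Toy Model system -i·(d/dt)b_j = -|b_j|²·b_j + 2·b_{j-1}²·conj(b_j) + 2·b_{j+1}²·conj(b_j) (with convention b_0 = b_{N+1} = 0), then the mass M(t) = Σ_{j=1}^N |b_j(t)|² is constant in time. -/
/-!
Along the flow, `d/dt |b_j|² = 4 (φ_j - φ_{j-1})` with `φ_k = Im (b_k² conj(b_{k+1})²)` the
exchange of mass between sites `k` and `k + 1`: the self-interaction term contributes nothing,
and each neighbour coupling contributes one exchange term. Summing over `j` telescopes to
`4 (φ_N - φ_0)`, which vanishes by the Dirichlet conditions, so the mass has zero derivative.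
-/

open Complex Finset ComplexConjugate

theorem Finset.sum_Icc_one_sub_pred {M : Type*} [AddCommGroup M] (f : ℕ → M) (N : ℕ) :
    ∑ j ∈ Icc 1 N, (f j - f (j - 1)) = f N - f 0 := by
  induction N with
  | zero => simp
  | succ N ih => rw [sum_Icc_succ_top (by omega), ih, Nat.add_sub_cancel]; abel

namespace ToyModel

noncomputable def field (a z c : ℂ) : ℂ :=
  -(‖z‖ : ℂ) ^ 2 * z + 2 * a ^ 2 * conj z + 2 * c ^ 2 * conj z

def flux (u v : ℂ) : ℝ := (u ^ 2 * conj v ^ 2).im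

theorem inner_I_mul_field (a z c : ℂ) :
    inner ℝ z (I * field a z c) = 2 * (flux z c - flux a z) := by
  have hz : ((‖z‖ : ℝ) : ℂ) ^ 2 = z * conj z := by
    rw [← ofReal_pow, Complex.sq_norm, mul_conj]
  rw [Complex.inner, field, flux, flux, hz]
  simp only [pow_two, mul_re, mul_im, add_re, add_im, neg_re, neg_im, I_re, I_im,
    conj_re, conj_im, re_ofNat, im_ofNat]
  ring

theorem hasDerivAt_sq_norm {f : ℝ → ℂ} {f' a c : ℂ} {t : ℝ} (hf : HasDerivAt f f' t)
    (hode : -I * f' = field a (f t) c) :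
    HasDerivAt (‖f ·‖ ^ 2) (4 * (flux (f t) c - flux a (f t))) t := by
  have hf' : f' = I * field a (f t) c := by
    linear_combination I * hode + f' * I_sq
  convert hf.norm_sq using 1
  rw [hf', inner_I_mul_field]
  ring

end ToyModel

open Finset in
/-- Mass conservation for the Toy Model
`-i b_j' = -|b_j|² b_j + 2 b_{j-1}² conj(b_j) + 2 b_{j+1}² conj(b_j)`,
with Dirichlet boundary conditions `b_0 = b_{N+1} = 0`. -/
theorem toy_model_mass_conservation (N : ℕ) (b : ℕ → ℝ → ℂ)
    (hdiff : ∀ j, Differentiable ℝ (b j))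
    (hbc0 : ∀ t, b 0 t = 0) (hbcN : ∀ t, b (N + 1) t = 0)
    (hode : ∀ j ∈ Finset.Icc 1 N, ∀ t : ℝ,
      -Complex.I * deriv (b j) t =
        -(‖b j t‖ : ℂ) ^ 2 * b j t
          + 2 * (b (j - 1) t) ^ 2 * (starRingEnd ℂ) (b j t)
          + 2 * (b (j + 1) t) ^ 2 * (starRingEnd ℂ) (b j t)) :
    ∀ s t : ℝ,
      (∑ j ∈ Finset.Icc 1 N, ‖b j s‖ ^ 2) =
        ∑ j ∈ Finset.Icc 1 N, ‖b j t‖ ^ 2 := by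
  let F : ℕ → ℝ → ℝ := fun k t ↦ ToyModel.flux (b k t) (b (k + 1) t)
  have hmass : ∀ t, HasDerivAt (fun s ↦ ∑ j ∈ Icc 1 N, ‖b j s‖ ^ 2) 0 t := by
    intro t
    have hsite : ∀ j ∈ Icc 1 N,
        HasDerivAt (fun s ↦ ‖b j s‖ ^ 2) (4 * (F j t - F (j - 1) t)) t := by
      intro j hj
      have hj' : j - 1 + 1 = j := Nat.sub_add_cancel (mem_Icc.mp hj).1
      simpa only [F, hj'] using
        ToyModel.hasDerivAt_sq_norm ((hdiff j) t).hasDerivAt (hode j hj t)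
    have htel : ∑ j ∈ Icc 1 N, 4 * (F j t - F (j - 1) t) = 0 := by
      rw [← mul_sum, sum_Icc_one_sub_pred (F · t)]
      simp [F, ToyModel.flux, hbc0 t, hbcN t]
    simpa only [htel] using HasDerivAt.fun_sum hsite
  exact is_const_of_deriv_eq_zero (fun t ↦ (hmass t).differentiableAt) fun t ↦ (hmass t).deriv
end

section
/- If b : ℝ → ℂ^N solves the Toy Model system with Dirichlet boundary conditions, then the Hamiltonian H(t) = Σ_{j=1}^N ( (1/4)|b_j(t)|⁴ − Re( conj(b_j(t))² · b_{j-1}(t)² ) ) is constant in time. -/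
/-!
The equation says `b_j' = i F_j` with `F_j = toyField (b_{j-1}) (b_j) (b_{j+1})`, and `-F_j` is
the real gradient of `H` in `b_j`: the densities of index `j` and `j + 1` both depend on `b_j`,
and the Dirichlet conditions make the resulting index shift exact.
Hence `dH/dt = -∑ ⟪F_j, i F_j⟫_ℝ = 0`.
-/

open Finset Complex ComplexConjugate

theorem Finset.sum_Icc_sub_one_eq_sum_Icc {M : Type*} [AddCommMonoid M] {N : ℕ} {f : ℕ → M}
    (h0 : f 0 = 0) (hN : f N = 0) :
    ∑ j ∈ Icc 1 N, f (j - 1) = ∑ j ∈ Icc 1 N, f j := by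
  rw [← Ico_add_one_right_eq_Icc, sum_Ico_eq_sum_range, sum_Ico_eq_sum_range, Nat.add_sub_cancel]
  calc ∑ k ∈ range N, f (1 + k - 1)
      = ∑ k ∈ range (N + 1), f k := by simp [sum_range_succ, hN]
    _ = ∑ k ∈ range N, f (1 + k) := by simp [sum_range_succ', h0, add_comm]

theorem real_inner_eq_zero_of_neg_I_mul_eq {v w : ℂ} (h : -I * v = w) : inner ℝ w v = 0 := by
  subst h
  simp only [Complex.inner, map_mul, map_neg, conj_I, neg_neg, mul_re, I_re, I_im, conj_re,
    conj_im, mul_im]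
  ring

noncomputable def toyDensity (x y : ℂ) : ℝ := 1 / 4 * ‖y‖ ^ 4 - (conj y ^ 2 * x ^ 2).re

noncomputable def toyHamiltonian (N : ℕ) (b : ℕ → ℂ) : ℝ :=
  ∑ j ∈ Icc 1 N, toyDensity (b (j - 1)) (b j)

noncomputable def toyField (x y z : ℂ) : ℂ :=
  -(‖y‖ : ℂ) ^ 2 * y + 2 * x ^ 2 * conj y + 2 * z ^ 2 * conj y

theorem toyDensity_eq_inner (x y : ℂ) :
    toyDensity x y = 1 / 4 * (‖y‖ ^ 2) ^ 2 - inner ℝ (y ^ 2) (x ^ 2) := by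
  rw [toyDensity, Complex.inner, ← pow_mul, mul_comm (x ^ 2), map_pow]

theorem hasDerivAt_toyDensity {x y : ℝ → ℂ} {x' y' : ℂ} {t : ℝ}
    (hx : HasDerivAt x x' t) (hy : HasDerivAt y y' t) :
    HasDerivAt (fun t => toyDensity (x t) (y t))
      (-inner ℝ (-(‖y t‖ : ℂ) ^ 2 * y t + 2 * x t ^ 2 * conj (y t)) y'
        - inner ℝ (2 * y t ^ 2 * conj (x t)) x') t := by
  simp only [toyDensity_eq_inner]
  refine (((hy.norm_sq.pow 2).const_mul (1 / 4 : ℝ)).sub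
    ((hy.pow 2).inner ℝ (hx.pow 2))).congr_deriv ?_
  simp only [Complex.inner, mul_re, mul_im, add_re, add_im, neg_re, neg_im, conj_re, conj_im,
    ofReal_re, ofReal_im, re_ofNat, im_ofNat, pow_succ, pow_zero, one_mul, Nat.cast_ofNat,
    Pi.mul_apply]
  ring

theorem hasDerivAt_toyHamiltonian {N : ℕ} {b : ℕ → ℝ → ℂ} {t : ℝ}
    (hb : ∀ j, DifferentiableAt ℝ (b j) t) (hb0 : b 0 t = 0) (hbN : b (N + 1) t = 0) :
    HasDerivAt (fun t => toyHamiltonian N (b · t))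
      (-∑ j ∈ Icc 1 N, inner ℝ (toyField (b (j - 1) t) (b j t) (b (j + 1) t)) (deriv (b j) t))
      t := by
  refine (HasDerivAt.fun_sum fun j (_ : j ∈ Icc 1 N) =>
    hasDerivAt_toyDensity (hb (j - 1)).hasDerivAt (hb j).hasDerivAt).congr_deriv ?_
  have hshift :
      ∑ j ∈ Icc 1 N, inner ℝ (2 * b j t ^ 2 * conj (b (j - 1) t)) (deriv (b (j - 1)) t) =
        ∑ j ∈ Icc 1 N, inner ℝ (2 * b (j + 1) t ^ 2 * conj (b j t)) (deriv (b j) t) := by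
    rw [← sum_Icc_sub_one_eq_sum_Icc
      (f := fun k => inner ℝ (2 * b (k + 1) t ^ 2 * conj (b k t)) (deriv (b k) t))
      (by simp [hb0]) (by simp [hbN])]
    refine sum_congr rfl fun j hj => ?_
    rw [Nat.sub_add_cancel (mem_Icc.1 hj).1]
  simp only [toyField, inner_add_left, sum_add_distrib, sum_sub_distrib, sum_neg_distrib, hshift]
  ring

open Finset in
/-- Conservation of the Hamiltonian
`H = Σ_{j=1}^N ( (1/4)|b_j|⁴ − Re( conj(b_j)² b_{j-1}² ) )`
for the Toy Model with Dirichlet boundary conditions. -/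
theorem toy_model_hamiltonian_conservation (N : ℕ) (b : ℕ → ℝ → ℂ)
    (hdiff : ∀ j, Differentiable ℝ (b j))
    (hbc0 : ∀ t, b 0 t = 0) (hbcN : ∀ t, b (N + 1) t = 0)
    (hode : ∀ j ∈ Finset.Icc 1 N, ∀ t : ℝ,
      -Complex.I * deriv (b j) t =
        -(‖b j t‖ : ℂ) ^ 2 * b j t
          + 2 * (b (j - 1) t) ^ 2 * (starRingEnd ℂ) (b j t)
          + 2 * (b (j + 1) t) ^ 2 * (starRingEnd ℂ) (b j t)) :
    ∀ s t : ℝ,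
      (∑ j ∈ Finset.Icc 1 N,
        ((1 / 4) * ‖b j s‖ ^ 4
          - (((starRingEnd ℂ) (b j s)) ^ 2 * (b (j - 1) s) ^ 2).re)) =
      ∑ j ∈ Finset.Icc 1 N,
        ((1 / 4) * ‖b j t‖ ^ 4
          - (((starRingEnd ℂ) (b j t)) ^ 2 * (b (j - 1) t) ^ 2).re) := by
  have hH : ∀ t, HasDerivAt (fun t => toyHamiltonian N (b · t)) 0 t := by
    intro t
    have hderiv := hasDerivAt_toyHamiltonian (fun j => hdiff j t) (hbc0 t) (hbcN t)
    rwa [sum_eq_zero fun j hj => real_inner_eq_zero_of_neg_I_mul_eq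
      (w := toyField _ _ _) (hode j hj t), neg_zero] at hderiv
  exact is_const_of_deriv_eq_zero (fun t => (hH t).differentiableAt) fun t => (hH t).deriv
end

section
/- Under the Madelung transformation b_j = √(ρ_j)·e^{iφ_j} with ρ_j > 0, the Toy Model equation -i·b_j' = -|b_j|²·b_j + 2·b_{j-1}²·conj(b_j) + 2·b_{j+1}²·conj(b_j) is equivalent to the hydrodynamic system φ_j' = -ρ_j + 2ρ_{j-1}·cos(2(φ_{j-1}-φ_j)) + 2ρ_{j+1}·cos(2(φ_{j+1}-φ_j)) and ρ_j' = -4ρ_j·ρ_{j-1}·sin(2(φ_{j-1}-φ_j)) - 4ρ_j·ρ_{j+1}·sin(2(φ_{j+1}-φ_j)). -/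
/-!
Writing `b = √ρ e^{iφ}`, one has `b' = (ρ'/(2ρ) + iφ') b` and
`b_k² conj b = ρ_k e^{2i(φ_k - φ)} b`, so both sides of the Toy Model equation are multiples of
`b_j ≠ 0`. Cancelling `b_j`, the real part of the resulting scalar equation is the phase equation
and the imaginary part the density equation.
-/

open Complex ComplexConjugate

theorem hasDerivAt_sqrt_mul_exp_I_mul {r θ : ℝ → ℝ} {r' θ' t : ℝ} (hr : HasDerivAt r r' t)
    (hθ : HasDerivAt θ θ' t) (hpos : 0 < r t) :
    HasDerivAt (fun u => (√(r u) : ℂ) * exp (I * θ u))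
      ((((r' / (2 * r t) : ℝ) : ℂ) + θ' * I) * (√(r t) * exp (I * θ t))) t := by
  have hsqrt := (hr.sqrt hpos.ne').ofReal_comp
  have hexp := ((hθ.ofReal_comp).const_mul I).cexp
  refine (hsqrt.mul hexp).congr_deriv ?_
  have hs : (√(r t) : ℂ) ≠ 0 := by exact_mod_cast (Real.sqrt_pos.mpr hpos).ne'
  have hsq : (√(r t) : ℂ) ^ 2 = r t := by exact_mod_cast Real.sq_sqrt hpos.le
  push_cast
  rw [← hsq]
  field_simp

theorem norm_sqrt_mul_exp_I_mul_sq {r : ℝ} (hr : 0 ≤ r) (θ : ℝ) :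
    (‖(√r : ℂ) * exp (I * θ)‖ : ℂ) ^ 2 = r := by
  rw [mul_comm I, norm_mul, norm_exp_ofReal_mul_I, norm_real,
    Real.norm_of_nonneg (Real.sqrt_nonneg r), mul_one]
  exact_mod_cast Real.sq_sqrt hr

theorem sq_mul_conj_sqrt_mul_exp_I_mul {r₁ : ℝ} (hr₁ : 0 ≤ r₁) (θ₁ r θ : ℝ) :
    ((√r₁ : ℂ) * exp (I * θ₁)) ^ 2 * conj ((√r : ℂ) * exp (I * θ)) =
      r₁ * exp (↑(2 * (θ₁ - θ)) * I) * (√r * exp (I * θ)) := by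
  have hsq : (√r₁ : ℂ) ^ 2 = r₁ := by exact_mod_cast Real.sq_sqrt hr₁
  rw [map_mul, conj_ofReal, ← exp_conj, map_mul, conj_I, conj_ofReal, mul_pow, hsq,
    ← exp_nat_mul]
  calc _ = r₁ * √r * exp (2 * (I * θ₁) + -I * θ) := by rw [exp_add]; push_cast; ring
    _ = r₁ * √r * exp (↑(2 * (θ₁ - θ)) * I + I * θ) := by push_cast; ring_nf
    _ = _ := by rw [exp_add]; ring

theorem neg_I_mul_eq_iff {ρ ρ' φ' : ℝ} (hρ : ρ ≠ 0) (w : ℂ) :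
    -I * ((ρ' / (2 * ρ) : ℝ) + φ' * I) = w ↔ φ' = w.re ∧ ρ' = -2 * ρ * w.im := by
  simp only [Complex.ext_iff, mul_re, mul_im, add_re, add_im, neg_re, neg_im, I_re, I_im,
    ofReal_re, ofReal_im]
  constructor
  · rintro ⟨hre, him⟩
    refine ⟨by linarith, ?_⟩
    field_simp at him
    linarith
  · rintro ⟨hφ', hρ'⟩
    refine ⟨by linarith, ?_⟩
    field_simp
    linarith

theorem nonneg_of_pos_on_Icc_of_eq_zero {f : ℕ → ℝ} {N : ℕ}
    (hpos : ∀ j ∈ Finset.Icc 1 N, 0 < f j) (h0 : f 0 = 0) (hN : f (N + 1) = 0) {j : ℕ}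
    (hj : j ≤ N + 1) : 0 ≤ f j := by
  rcases Nat.eq_zero_or_pos j with rfl | hj0
  · exact h0.ge
  rcases hj.eq_or_lt with rfl | hjN
  · exact hN.ge
  exact (hpos j (Finset.mem_Icc.mpr ⟨hj0, by omega⟩)).le

theorem neg_I_mul_deriv_eq_iff_of_sqrt_mul_exp_I_mul {r θ : ℝ → ℝ} {t r₁ θ₁ r₂ θ₂ : ℝ}
    (hr : DifferentiableAt ℝ r t) (hθ : DifferentiableAt ℝ θ t) (hpos : 0 < r t)
    (hr₁ : 0 ≤ r₁) (hr₂ : 0 ≤ r₂) :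
    -I * deriv (fun u => (√(r u) : ℂ) * exp (I * θ u)) t =
        -(‖(√(r t) : ℂ) * exp (I * θ t)‖ : ℂ) ^ 2 * (√(r t) * exp (I * θ t))
          + 2 * ((√r₁ : ℂ) * exp (I * θ₁)) ^ 2 * conj ((√(r t) : ℂ) * exp (I * θ t))
          + 2 * ((√r₂ : ℂ) * exp (I * θ₂)) ^ 2 * conj ((√(r t) : ℂ) * exp (I * θ t)) ↔
      deriv θ t =
          -r t + 2 * r₁ * Real.cos (2 * (θ₁ - θ t)) + 2 * r₂ * Real.cos (2 * (θ₂ - θ t)) ∧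
        deriv r t =
          -4 * r t * r₁ * Real.sin (2 * (θ₁ - θ t)) - 4 * r t * r₂ * Real.sin (2 * (θ₂ - θ t)) := by
  have hz : (√(r t) : ℂ) * exp (I * θ t) ≠ 0 :=
    mul_ne_zero (by exact_mod_cast (Real.sqrt_pos.mpr hpos).ne') (exp_ne_zero _)
  rw [(hasDerivAt_sqrt_mul_exp_I_mul hr.hasDerivAt hθ.hasDerivAt hpos).deriv,
    norm_sqrt_mul_exp_I_mul_sq hpos.le, mul_assoc 2, sq_mul_conj_sqrt_mul_exp_I_mul hr₁,
    mul_assoc 2, sq_mul_conj_sqrt_mul_exp_I_mul hr₂, ← mul_assoc 2 _ (_ * _),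
    ← mul_assoc 2 _ (_ * _), ← add_mul, ← add_mul, ← mul_assoc, mul_left_inj' hz,
    neg_I_mul_eq_iff hpos.ne']
  simp only [add_re, add_im, neg_re, neg_im, mul_re, mul_im, ofReal_re, ofReal_im,
    exp_ofReal_mul_I_re, exp_ofReal_mul_I_im, re_ofNat, im_ofNat]
  exact and_congr (Eq.congr_right (by ring)) (Eq.congr_right (by ring))

/-- Madelung transformation: under `b_j = √(ρ_j) e^{iφ_j}` with `ρ_j > 0`,
the Toy Model equations are equivalent to the hydrodynamic system. -/
theorem toy_model_madelung_equivalence (N : ℕ) (ρ φ : ℕ → ℝ → ℝ)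
    (hρdiff : ∀ j, Differentiable ℝ (ρ j)) (hφdiff : ∀ j, Differentiable ℝ (φ j))
    (hρpos : ∀ j ∈ Finset.Icc 1 N, ∀ t : ℝ, 0 < ρ j t)
    (hbc0 : ∀ t : ℝ, ρ 0 t = 0) (hbcN : ∀ t : ℝ, ρ (N + 1) t = 0)
    (b : ℕ → ℝ → ℂ)
    (hb : ∀ j t, b j t = (Real.sqrt (ρ j t) : ℂ) * Complex.exp (Complex.I * (φ j t))) :
    (∀ j ∈ Finset.Icc 1 N, ∀ t : ℝ,
      -Complex.I * deriv (b j) t =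
        -(‖b j t‖ : ℂ) ^ 2 * b j t
          + 2 * (b (j - 1) t) ^ 2 * (starRingEnd ℂ) (b j t)
          + 2 * (b (j + 1) t) ^ 2 * (starRingEnd ℂ) (b j t))
    ↔
    (∀ j ∈ Finset.Icc 1 N, ∀ t : ℝ,
      deriv (φ j) t =
        -ρ j t + 2 * ρ (j - 1) t * Real.cos (2 * (φ (j - 1) t - φ j t))
          + 2 * ρ (j + 1) t * Real.cos (2 * (φ (j + 1) t - φ j t)) ∧
      deriv (ρ j) t =
        -4 * ρ j t * ρ (j - 1) t * Real.sin (2 * (φ (j - 1) t - φ j t))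
          - 4 * ρ j t * ρ (j + 1) t * Real.sin (2 * (φ (j + 1) t - φ j t))) := by
  have hb_fun : ∀ j, b j = fun u => (√(ρ j u) : ℂ) * exp (I * φ j u) := fun j => funext (hb j)
  refine forall₂_congr fun j hj => forall_congr' fun t => ?_
  have hj_bounds := Finset.mem_Icc.mp hj
  have hρ_nonneg {k : ℕ} (hk : k ≤ N + 1) : 0 ≤ ρ k t :=
    nonneg_of_pos_on_Icc_of_eq_zero (fun k hk => hρpos k hk t) (hbc0 t) (hbcN t) hk
  simp only [hb_fun]
  exact neg_I_mul_deriv_eq_iff_of_sqrt_mul_exp_I_mul (hρdiff j t) (hφdiff j t) (hρpos j hj t)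
    (hρ_nonneg (by omega)) (hρ_nonneg (by omega))
end

section
/- For every N ≥ 1 and every ω ∈ ℝ, there is a unique ρ ∈ ℝ^N satisfying -ρ_j + 2ρ_{j-1} + 2ρ_{j+1} = ω for all j = 1,...,N (with convention ρ_0 = ρ_{N+1} = 0). -/
/-!
In matrix form the system reads `M ρ = ω 𝟙` with `M = -1 + 2 A`, where `A` is the adjacency
matrix of the path graph on `N` vertices; extending `ρ` by zero is exactly what makes the first
and last rows of `A` have a single entry. Since `M` has integer entries and `M ≡ -1 (mod 2)`,
its determinant is odd, hence nonzero, and `M` is invertible over `ℝ`.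
-/

/-- Extension of `ρ : Fin N → ℝ` to `ℕ` (indexed `1,…,N`), by zero outside. -/
def extProfile (N : ℕ) (ρ : Fin N → ℝ) (k : ℕ) : ℝ :=
  if h : 1 ≤ k ∧ k ≤ N then ρ ⟨k - 1, by omega⟩ else 0

open Matrix SimpleGraph

instance (N : ℕ) : DecidableRel (pathGraph N).Adj := fun _ _ => decidable_of_iff' _ pathGraph_adj

def phaseMatrix (R : Type*) [Ring R] (N : ℕ) : Matrix (Fin N) (Fin N) R :=
  -1 + (2 : R) • (pathGraph N).adjMatrix R

theorem phaseMatrix_intCast (R : Type*) [Ring R] (N : ℕ) :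
    (phaseMatrix ℤ N).map (Int.cast : ℤ → R) = phaseMatrix R N := by
  ext i j
  simp only [phaseMatrix, map_apply, Matrix.add_apply, Matrix.neg_apply, one_apply,
    Matrix.smul_apply, adjMatrix_apply, smul_eq_mul]
  split_ifs <;> simp_all

theorem odd_det_phaseMatrix (N : ℕ) : Odd (phaseMatrix ℤ N).det := by
  rw [← ZMod.intCast_eq_one_iff_odd, Int.cast_det, phaseMatrix_intCast, phaseMatrix,
    show (2 : ZMod 2) = 0 from rfl, zero_smul, add_zero, det_neg, det_one, CharTwo.neg_eq, one_pow,
    mul_one]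

theorem isUnit_phaseMatrix (K : Type*) [Field K] [CharZero K] (N : ℕ) :
    IsUnit (phaseMatrix K N) := by
  rw [isUnit_iff_isUnit_det, isUnit_iff_ne_zero, ← phaseMatrix_intCast, ← Int.cast_det,
    Int.cast_ne_zero]
  intro h
  simpa [h] using odd_det_phaseMatrix N

theorem extProfile_eq_sum (N : ℕ) (ρ : Fin N → ℝ) (k : ℕ) :
    extProfile N ρ k = ∑ j : Fin N, if j.val + 1 = k then ρ j else 0 := by
  unfold extProfile
  split_ifs with h
  · rw [Finset.sum_eq_single ⟨k - 1, by omega⟩]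
    · exact (if_pos (Nat.sub_add_cancel h.1)).symm
    · exact fun j _ hj => if_neg fun hjk => hj (Fin.ext (by simp only; omega))
    · simp
  · refine (Finset.sum_eq_zero fun j _ => if_neg ?_).symm
    omega

theorem extProfile_succ (N : ℕ) (ρ : Fin N → ℝ) (i : Fin N) :
    extProfile N ρ (i + 1) = ρ i := by
  simp [extProfile]

theorem adjMatrix_pathGraph_mulVec_apply (N : ℕ) (ρ : Fin N → ℝ) (i : Fin N) :
    ((pathGraph N).adjMatrix ℝ *ᵥ ρ) i = extProfile N ρ i + extProfile N ρ (i + 2) := by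
  simp only [mulVec, dotProduct, adjMatrix_apply, extProfile_eq_sum, ← Finset.sum_add_distrib]
  refine Finset.sum_congr rfl fun j _ => ?_
  simp only [pathGraph_adj]
  split_ifs <;> first | omega | simp

theorem phaseMatrix_mulVec_apply (N : ℕ) (ρ : Fin N → ℝ) (i : Fin N) :
    (phaseMatrix ℝ N *ᵥ ρ) i =
      -extProfile N ρ (i + 1) + 2 * extProfile N ρ i + 2 * extProfile N ρ (i + 2) := by
  rw [phaseMatrix, add_mulVec, neg_mulVec, one_mulVec, smul_mulVec, Pi.add_apply, Pi.neg_apply,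
    Pi.smul_apply, adjMatrix_pathGraph_mulVec_apply, extProfile_succ, smul_eq_mul]
  ring

theorem phaseMatrix_mulVec_eq_const_iff (N : ℕ) (ρ : Fin N → ℝ) (ω : ℝ) :
    phaseMatrix ℝ N *ᵥ ρ = (fun _ => ω) ↔ ∀ j ∈ Finset.Icc 1 N,
      -extProfile N ρ j + 2 * extProfile N ρ (j - 1) + 2 * extProfile N ρ (j + 1) = ω := by
  simp only [funext_iff, phaseMatrix_mulVec_apply, Finset.mem_Icc]
  constructor
  · rintro h j ⟨hj1, hjN⟩
    obtain ⟨i, rfl⟩ : ∃ i : ℕ, j = i + 1 := ⟨j - 1, by omega⟩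
    exact h ⟨i, by omega⟩
  · intro h i
    exact h (i + 1) ⟨by omega, i.isLt⟩

theorem phase_locked_exists_unique_general (N : ℕ) (ω : ℝ) :
    ∃! ρ : Fin N → ℝ,
      ∀ j ∈ Finset.Icc 1 N,
        -extProfile N ρ j + 2 * extProfile N ρ (j - 1)
          + 2 * extProfile N ρ (j + 1) = ω := by
  have hunit := isUnit_phaseMatrix ℝ N
  have hbij : Function.Bijective (phaseMatrix ℝ N *ᵥ ·) :=
    ⟨mulVec_injective_iff_isUnit.2 hunit, mulVec_surjective_iff_isUnit.2 hunit⟩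
  simpa only [phaseMatrix_mulVec_eq_const_iff] using hbij.existsUnique (fun _ => ω)

/-- For every `N ≥ 1` and every `ω`, there is a unique `ρ ∈ ℝ^N` with
`-ρ_j + 2ρ_{j-1} + 2ρ_{j+1} = ω` for `j = 1,…,N` (with `ρ_0 = ρ_{N+1} = 0`). -/
theorem phase_locked_exists_unique (N : ℕ) (hN : 1 ≤ N) (ω : ℝ) :
    ∃! ρ : Fin N → ℝ,
      ∀ j ∈ Finset.Icc 1 N,
        -extProfile N ρ j + 2 * extProfile N ρ (j - 1)
          + 2 * extProfile N ρ (j + 1) = ω :=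
  phase_locked_exists_unique_general N ω
end

section
/- If ρ, φ : ℝ → ℝ^N solve the periodic hydrodynamic Toy Model system (indices mod N) and initially ρ_{j+1}(0) = ρ_{j-1}(0) and φ_{j+1}(0) = φ_{j-1}(0) for all j, then ρ_{j+1}(t) = ρ_{j-1}(t) and φ_{j+1}(t) = φ_{j-1}(t) for all t and all j. -/
/-!
The system is equivariant under the translation of indices `j ↦ j + 2`, and the hypothesis says
that the initial state is fixed by it. The translate of the solution is therefore a solution with
the same initial state; the vector field is smooth, hence locally Lipschitz, so uniqueness of
solutions makes the two coincide for all time.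
-/

open Set Real

section Uniqueness

variable {E : Type*} [NormedAddCommGroup E] [NormedSpace ℝ E] {v : E → E} {f g : ℝ → E} {t₀ : ℝ}

theorem ODE_solution_unique_of_locallyLipschitz (hv : LocallyLipschitz v)
    (hf : ∀ t, HasDerivAt f (v (f t)) t) (hg : ∀ t, HasDerivAt g (v (g t)) t)
    (heq : f t₀ = g t₀) : f = g := by
  ext t
  obtain ⟨a, b, ht, ht₀⟩ : ∃ a b, t ∈ Ioo a b ∧ t₀ ∈ Ioo a b :=
    ⟨min t t₀ - 1, max t t₀ + 1, by constructor <;> constructor <;> grind⟩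
  -- on a bounded time interval both solutions stay in a compact set, where `v` is Lipschitz
  have hcont : ∀ {h : ℝ → E}, (∀ t, HasDerivAt h (v (h t)) t) → Continuous h :=
    fun hh ↦ continuous_iff_continuousAt.2 fun t ↦ (hh t).continuousAt
  set S := f '' Icc a b ∪ g '' Icc a b
  have hS : IsCompact S :=
    (isCompact_Icc.image (hcont hf)).union (isCompact_Icc.image (hcont hg))
  obtain ⟨K, hK⟩ := (hv.locallyLipschitzOn (s := S)).exists_lipschitzOnWith_of_compact hS
  exact ODE_solution_unique_of_mem_Ioo (s := fun _ ↦ S) (fun _ _ ↦ hK) ht₀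
    (fun t ht ↦ ⟨hf t, .inl ⟨t, Ioo_subset_Icc_self ht, rfl⟩⟩)
    (fun t ht ↦ ⟨hg t, .inr ⟨t, Ioo_subset_Icc_self ht, rfl⟩⟩) heq ht

theorem ODE_solution_map_eq_of_commute (hv : LocallyLipschitz v) (L : E →L[ℝ] E)
    (hL : ∀ x, v (L x) = L (v x)) (hf : ∀ t, HasDerivAt f (v (f t)) t) (h₀ : L (f t₀) = f t₀)
    (t : ℝ) : L (f t) = f t :=
  congrFun (ODE_solution_unique_of_locallyLipschitz (f := L ∘ f) hv
    (fun t ↦ by simpa [hL] using L.hasFDerivAt.comp_hasDerivAt t (hf t)) hf h₀) t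

end Uniqueness

namespace Hydro

/-- A state `x` stands for `(ρ, φ) = (x.1, x.2)`. -/
abbrev State (N : ℕ) := (ZMod N → ℝ) × (ZMod N → ℝ)

variable {N : ℕ}

noncomputable def field (x : State N) : State N :=
  (fun j ↦ -4 * x.1 j * x.1 (j - 1) * sin (2 * (x.2 (j - 1) - x.2 j))
      - 4 * x.1 j * x.1 (j + 1) * sin (2 * (x.2 (j + 1) - x.2 j)),
   fun j ↦ -x.1 j + 2 * x.1 (j - 1) * cos (2 * (x.2 (j - 1) - x.2 j))
      + 2 * x.1 (j + 1) * cos (2 * (x.2 (j + 1) - x.2 j)))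

theorem contDiff_field [NeZero N] : ContDiff ℝ 1 (field (N := N)) := by
  unfold field
  fun_prop

def shift (k : ZMod N) : State N →L[ℝ] State N :=
  let s : (ZMod N → ℝ) →L[ℝ] (ZMod N → ℝ) := .pi fun j ↦ .proj (j + k)
  s.prodMap s

@[simp]
theorem shift_apply (k : ZMod N) (x : State N) :
    shift k x = (fun j ↦ x.1 (j + k), fun j ↦ x.2 (j + k)) := rfl

theorem field_shift (k : ZMod N) (x : State N) : field (shift k x) = shift k (field x) := by
  have hsub : ∀ j : ZMod N, j - 1 + k = j + k - 1 := fun j ↦ by ring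
  have hadd : ∀ j : ZMod N, j + 1 + k = j + k + 1 := fun j ↦ by ring
  simp [field, hsub, hadd]

theorem shift_two_eq_self_iff (x : State N) :
    shift 2 x = x ↔ ∀ j, x.1 (j + 1) = x.1 (j - 1) ∧ x.2 (j + 1) = x.2 (j - 1) := by
  have hsub : ∀ j : ZMod N, j - 1 + 2 = j + 1 := fun j ↦ by ring
  have hadd : ∀ j : ZMod N, j + 1 + 1 = j + 2 := fun j ↦ by ring
  simp only [shift_apply, Prod.ext_iff, funext_iff, ← forall_and]
  constructor
  · intro h j
    simpa only [hsub] using h (j - 1)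
  · intro h j
    simpa only [hadd, add_sub_cancel_right] using h (j + 1)

theorem hasDerivAt_state [NeZero N] {ρ φ : ZMod N → ℝ → ℝ}
    (hρdiff : ∀ j, Differentiable ℝ (ρ j)) (hφdiff : ∀ j, Differentiable ℝ (φ j))
    (hφode : ∀ j, ∀ t : ℝ,
      deriv (φ j) t =
        -ρ j t + 2 * ρ (j - 1) t * cos (2 * (φ (j - 1) t - φ j t))
          + 2 * ρ (j + 1) t * cos (2 * (φ (j + 1) t - φ j t)))
    (hρode : ∀ j, ∀ t : ℝ,
      deriv (ρ j) t =
        -4 * ρ j t * ρ (j - 1) t * sin (2 * (φ (j - 1) t - φ j t))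
          - 4 * ρ j t * ρ (j + 1) t * sin (2 * (φ (j + 1) t - φ j t))) (t : ℝ) :
    HasDerivAt (fun s ↦ ((fun j ↦ ρ j s, fun j ↦ φ j s) : State N))
      (field (fun j ↦ ρ j t, fun j ↦ φ j t)) t := by
  have hρ := hasDerivAt_pi.2 fun j ↦ (hρdiff j t).hasDerivAt
  have hφ := hasDerivAt_pi.2 fun j ↦ (hφdiff j t).hasDerivAt
  convert hρ.prodMk hφ using 1
  ext j <;> simp [field, hρode, hφode]

end Hydro

theorem periodic_hydro_symmetry_preserved_general (N : ℕ) [NeZero N]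
    (ρ φ : ZMod N → ℝ → ℝ)
    (hρdiff : ∀ j, Differentiable ℝ (ρ j)) (hφdiff : ∀ j, Differentiable ℝ (φ j))
    (hφode : ∀ j, ∀ t : ℝ,
      deriv (φ j) t =
        -ρ j t + 2 * ρ (j - 1) t * Real.cos (2 * (φ (j - 1) t - φ j t))
          + 2 * ρ (j + 1) t * Real.cos (2 * (φ (j + 1) t - φ j t)))
    (hρode : ∀ j, ∀ t : ℝ,
      deriv (ρ j) t =
        -4 * ρ j t * ρ (j - 1) t * Real.sin (2 * (φ (j - 1) t - φ j t))
          - 4 * ρ j t * ρ (j + 1) t * Real.sin (2 * (φ (j + 1) t - φ j t)))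
    (hρ0 : ∀ j, ρ (j + 1) 0 = ρ (j - 1) 0)
    (hφ0 : ∀ j, φ (j + 1) 0 = φ (j - 1) 0) :
    ∀ j, ∀ t : ℝ, ρ (j + 1) t = ρ (j - 1) t ∧ φ (j + 1) t = φ (j - 1) t := by
  set x : ℝ → Hydro.State N := fun t ↦ (fun j ↦ ρ j t, fun j ↦ φ j t)
  have hx : ∀ t, HasDerivAt x (Hydro.field (x t)) t :=
    Hydro.hasDerivAt_state hρdiff hφdiff hφode hρode
  have hx₀ : Hydro.shift 2 (x 0) = x 0 :=
    (Hydro.shift_two_eq_self_iff _).2 fun j ↦ ⟨hρ0 j, hφ0 j⟩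
  intro j t
  have hxt : Hydro.shift 2 (x t) = x t :=
    ODE_solution_map_eq_of_commute Hydro.contDiff_field.locallyLipschitz (Hydro.shift 2)
      (Hydro.field_shift 2) hx hx₀ t
  exact (Hydro.shift_two_eq_self_iff _).1 hxt j

/-- For the periodic hydrodynamic Toy Model (indices mod `N`), the symmetry
`ρ_{j+1} = ρ_{j-1}`, `φ_{j+1} = φ_{j-1}` is preserved under the flow. -/
theorem periodic_hydro_symmetry_preserved (N : ℕ) [NeZero N]
    (ρ φ : ZMod N → ℝ → ℝ)
    (hρdiff : ∀ j, Differentiable ℝ (ρ j)) (hφdiff : ∀ j, Differentiable ℝ (φ j))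
    (hρC1 : ∀ j, Continuous (deriv (ρ j))) (hφC1 : ∀ j, Continuous (deriv (φ j)))
    (hφode : ∀ j, ∀ t : ℝ,
      deriv (φ j) t =
        -ρ j t + 2 * ρ (j - 1) t * Real.cos (2 * (φ (j - 1) t - φ j t))
          + 2 * ρ (j + 1) t * Real.cos (2 * (φ (j + 1) t - φ j t)))
    (hρode : ∀ j, ∀ t : ℝ,
      deriv (ρ j) t =
        -4 * ρ j t * ρ (j - 1) t * Real.sin (2 * (φ (j - 1) t - φ j t))
          - 4 * ρ j t * ρ (j + 1) t * Real.sin (2 * (φ (j + 1) t - φ j t)))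
    (hρ0 : ∀ j, ρ (j + 1) 0 = ρ (j - 1) 0)
    (hφ0 : ∀ j, φ (j + 1) 0 = φ (j - 1) 0) :
    ∀ j, ∀ t : ℝ, ρ (j + 1) t = ρ (j - 1) t ∧ φ (j + 1) t = φ (j - 1) t :=
  periodic_hydro_symmetry_preserved_general N ρ φ hρdiff hφdiff hφode hρode hρ0 hφ0
end

section
/- For the reduced two-variable system Δφ' = -Δρ·(1 + 4·cos(2Δφ)), Δρ' = 4·(r² - Δρ²)·sin(2Δφ) with constant parameter r, the quantity H = (1/2)·(1 + 4·cos(2Δφ))·(r² - Δρ²) is conserved along solutions. -/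
/-!
The system is Hamiltonian: with `Δφ` as position, `Δρ` as momentum and `H` as Hamiltonian,
`Δφ' = ∂H/∂Δρ` and `Δρ' = -∂H/∂Δφ`. Along any such flow `dH/dt = H_q H_p - H_p H_q = 0`.
-/

open Real ContinuousLinearMap

theorem hamiltonian_conserved {H : ℝ × ℝ → ℝ} {H' : ℝ × ℝ → ℝ × ℝ →L[ℝ] ℝ}
    (hH : ∀ z, HasFDerivAt H (H' z) z) {q p : ℝ → ℝ}
    (hq : ∀ t, HasDerivAt q (H' (q t, p t) (0, 1)) t)
    (hp : ∀ t, HasDerivAt p (-H' (q t, p t) (1, 0)) t) (s t : ℝ) :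
    H (q s, p s) = H (q t, p t) := by
  have hderiv : ∀ t, HasDerivAt (fun t => H (q t, p t)) 0 t := by
    intro t
    set D := H' (q t, p t)
    refine ((hH (q t, p t)).comp_hasDerivAt t ((hq t).prodMk (hp t))).congr_deriv ?_
    calc D (D (0, 1), -D (1, 0))
        = D (D (0, 1) • (1, 0) + (-D (1, 0)) • (0, 1)) := by simp
      _ = 0 := by rw [map_add, map_smul, map_smul, smul_eq_mul, smul_eq_mul]; ring
  exact is_const_of_deriv_eq_zero (fun x => (hderiv x).differentiableAt)
    (fun x => (hderiv x).deriv) s t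

noncomputable def reducedEnergy (r : ℝ) (z : ℝ × ℝ) : ℝ :=
  1 / 2 * (1 + 4 * cos (2 * z.1)) * (r ^ 2 - z.2 ^ 2)

theorem hasFDerivAt_reducedEnergy (r : ℝ) (z : ℝ × ℝ) :
    HasFDerivAt (reducedEnergy r)
      ((-4 * sin (2 * z.1) * (r ^ 2 - z.2 ^ 2)) • fst ℝ ℝ ℝ
        + (-(1 + 4 * cos (2 * z.1)) * z.2) • snd ℝ ℝ ℝ) z := by
  have hcos := (hasDerivAt_cos (2 * z.1)).comp_hasFDerivAt z
    ((hasFDerivAt_fst (𝕜 := ℝ) (p := z)).const_mul 2)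
  have hsq := (hasFDerivAt_snd (𝕜 := ℝ) (p := z)).pow 2
  refine ((((hcos.const_mul 4).const_add 1).const_mul (1 / 2)).mul
    (hsq.const_sub (r ^ 2))).congr_fderiv ?_
  ext <;>
    simp only [Function.comp_apply, Nat.add_one_sub_one, pow_one, nsmul_eq_mul, Nat.cast_ofNat,
      add_comp, neg_comp, smul_comp, fst_comp_inl, snd_comp_inl, fst_comp_inr, snd_comp_inr,
      smul_zero, neg_zero, zero_add, add_zero, neg_apply, smul_apply, id_apply, smul_eq_mul,
      mul_one] <;>
    ring

/-- The quantity `H = (1/2)(1 + 4cos(2Δφ))(r² - Δρ²)` is conserved along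
solutions of `Δφ' = -Δρ(1 + 4cos(2Δφ))`, `Δρ' = 4(r² - Δρ²) sin(2Δφ)`. -/
theorem reduced_system_energy_conserved (r : ℝ) (dφ dρ : ℝ → ℝ)
    (hφdiff : Differentiable ℝ dφ) (hρdiff : Differentiable ℝ dρ)
    (hφode : ∀ t, deriv dφ t = -dρ t * (1 + 4 * Real.cos (2 * dφ t)))
    (hρode : ∀ t, deriv dρ t = 4 * (r ^ 2 - dρ t ^ 2) * Real.sin (2 * dφ t)) :
    ∀ s t : ℝ,
      (1 / 2) * (1 + 4 * Real.cos (2 * dφ s)) * (r ^ 2 - dρ s ^ 2) =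
        (1 / 2) * (1 + 4 * Real.cos (2 * dφ t)) * (r ^ 2 - dρ t ^ 2) :=
  hamiltonian_conserved (hasFDerivAt_reducedEnergy r)
    (fun t => (hφdiff t).hasDerivAt.congr_deriv (by
      simp only [hφode, add_apply, smul_apply, coe_fst', coe_snd', smul_eq_mul]; ring))
    (fun t => (hρdiff t).hasDerivAt.congr_deriv (by
      simp only [hρode, add_apply, smul_apply, coe_fst', coe_snd', smul_eq_mul]; ring))
end

section
/- For the reduced two-variable system, the dynamics are Hamiltonian: with H(Δφ, Δρ) = (1/2)·(1 + 4·cos(2Δφ))·(r² - Δρ²), one has ∂H/∂Δρ = -Δρ·(1 + 4·cos(2Δφ)) and -∂H/∂Δφ = 4·(r² - Δρ²)·sin(2Δφ). -/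
/-- With `H(x, y) = (1/2)(1 + 4cos(2x))(r² - y²)`, the reduced system is
Hamiltonian: `∂H/∂y = -y(1 + 4cos(2x))` and `-∂H/∂x = 4(r² - y²) sin(2x)`. -/
theorem reduced_system_hamiltonian_structure (r : ℝ)
    (H : ℝ → ℝ → ℝ)
    (hH : ∀ x y, H x y = (1 / 2) * (1 + 4 * Real.cos (2 * x)) * (r ^ 2 - y ^ 2)) :
    ∀ x y : ℝ,
      deriv (fun y' => H x y') y = -y * (1 + 4 * Real.cos (2 * x)) ∧
      -deriv (fun x' => H x' y) x = 4 * (r ^ 2 - y ^ 2) * Real.sin (2 * x) := by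
  intro x y
  obtain rfl : H = fun x y => (1 / 2) * (1 + 4 * Real.cos (2 * x)) * (r ^ 2 - y ^ 2) :=
    funext₂ hH
  constructor
  · rw [deriv_const_mul_field, deriv_const_sub, deriv_pow_field]
    ring
  · rw [deriv_mul_const_field, deriv_const_mul_field, deriv_const_add, deriv_const_mul_field,
      deriv_comp_mul_left (f := Real.cos), Real.deriv_cos, smul_eq_mul]
    ring
end

section
/- The function U(x) = (2/3)·sin²((1/2)·√(3/2)·x) solves the ODE 2·U'' + 3·U - 1 = 0 on ℝ, and satisfies the first integral (U')² + (3/2)·U² - U = 0. -/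
/-! By the half-angle formula `U x = (1 - cos (k x)) / 3` with `k = √(3/2)`, so `k² = 3/2`.
Then `U'' = (1/2) cos (k x)` and both identities reduce to `sin² + cos² = 1`. -/

open Real

lemma hasDerivAt_sin_mul (k x : ℝ) : HasDerivAt (fun y => sin (k * y)) (k * cos (k * x)) x := by
  simpa [mul_comm] using ((hasDerivAt_id x).const_mul k).sin

lemma hasDerivAt_cos_mul (k x : ℝ) : HasDerivAt (fun y => cos (k * y)) (-(k * sin (k * x))) x := by
  simpa [mul_comm] using ((hasDerivAt_id x).const_mul k).cos

lemma deriv_one_sub_cos_mul (a k : ℝ) :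
    deriv (fun x => a * (1 - cos (k * x))) = fun x => a * k * sin (k * x) := by
  funext x
  rw [(((hasDerivAt_cos_mul k x).const_sub 1).const_mul a).deriv]
  ring

lemma deriv_deriv_one_sub_cos_mul (a k x : ℝ) :
    deriv (deriv fun x => a * (1 - cos (k * x))) x = a * k ^ 2 * cos (k * x) := by
  rw [deriv_one_sub_cos_mul, ((hasDerivAt_sin_mul k x).const_mul (a * k)).deriv]
  ring

lemma sq_sin_half_mul (k x : ℝ) :
    sin ((1 / 2) * k * x) ^ 2 = (1 / 2) * (1 - cos (k * x)) := by
  rw [sin_sq_eq_half_sub]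
  ring_nf

/-- `U(x) = (2/3) sin²((1/2)√(3/2) x)` solves `2U'' + 3U - 1 = 0` and the
first integral `(U')² + (3/2)U² - U = 0`. -/
theorem compacton_U_solves_ode (U : ℝ → ℝ)
    (hU : ∀ x, U x = (2 / 3) * Real.sin ((1 / 2) * Real.sqrt (3 / 2) * x) ^ 2) :
    ∀ x : ℝ,
      2 * deriv (deriv U) x + 3 * U x - 1 = 0 ∧
      deriv U x ^ 2 + (3 / 2) * U x ^ 2 - U x = 0 := by
  set k := √(3 / 2)
  have hk : k ^ 2 = 3 / 2 := sq_sqrt (by norm_num)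
  have hU' : U = fun x => (1 / 3) * (1 - cos (k * x)) := by
    funext x
    rw [hU, sq_sin_half_mul]
    ring
  intro x
  have hpyth := sin_sq_add_cos_sq (k * x)
  rw [hU', deriv_deriv_one_sub_cos_mul, deriv_one_sub_cos_mul, hk]
  constructor
  · ring
  · linear_combination (1 / 9 * sin (k * x) ^ 2) * hk + (1 / 6) * hpyth
end

section
/- The function Q(x) = √(2/3)·sin((1/2)·√(3/2)·x) satisfies Q = 3·Q³ + 2·Q·(Q²)'' on ℝ. -/
/-!
For `Q x = c * sin (a * x)` the double-angle formula gives
`(Q²)'' = 2 a² c² cos (2 a x) = 2 a² c² (1 - 2 sin² (a x))`, so the profile equation reads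
`Q · (1 - 4 a² c² - (3 - 8 a²) c² sin² (a x)) = 0`. It therefore holds as soon as `8 a² = 3` and
`4 a² c² = 1`, which is the case for `a = √(3/2) / 2` and `c = √(2/3)`.
-/

open Real

theorem hasDerivAt_sin_mul_sq (a y : ℝ) :
    HasDerivAt (fun y => sin (a * y) ^ 2) (a * sin (2 * a * y)) y :=
  (((hasDerivAt_id' y).const_mul a).sin.fun_pow 2).congr_deriv <| by
    rw [mul_assoc 2 a y, sin_two_mul]
    push_cast
    ring

theorem hasDerivAt_mul_sin_mul (a b y : ℝ) :
    HasDerivAt (fun y => a * sin (b * y)) (a * b * cos (b * y)) y :=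
  (((hasDerivAt_id' y).const_mul b).sin.const_mul a).congr_deriv <| by ring

theorem deriv_deriv_sin_mul_sq (a x : ℝ) :
    deriv (deriv fun y => sin (a * y) ^ 2) x = 2 * a ^ 2 * cos (2 * a * x) := by
  rw [funext fun y => (hasDerivAt_sin_mul_sq a y).deriv, (hasDerivAt_mul_sin_mul a (2 * a) x).deriv]
  ring

theorem sin_mul_solves_profile_equation {a c : ℝ} (ha : 8 * a ^ 2 = 3)
    (hac : 4 * a ^ 2 * c ^ 2 = 1) (x : ℝ) :
    c * sin (a * x) = 3 * (c * sin (a * x)) ^ 3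
      + 2 * (c * sin (a * x)) * deriv (deriv fun y => (c * sin (a * y)) ^ 2) x := by
  have hderiv : deriv (deriv fun y => (c * sin (a * y)) ^ 2) x
      = c ^ 2 * (2 * a ^ 2 * (1 - 2 * sin (a * x) ^ 2)) := by
    simp_rw [mul_pow, deriv_const_mul_field', deriv_deriv_sin_mul_sq, mul_assoc 2 a x, cos_two_mul,
      cos_sq']
    ring
  rw [hderiv]
  linear_combination (-c * sin (a * x)) * hac + (c ^ 3 * sin (a * x) ^ 3) * ha

/-- `Q(x) = √(2/3) sin((1/2)√(3/2) x)` satisfies the compacton profile equation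
`Q = 3Q³ + 2Q (Q²)''`. -/
theorem compacton_Q_profile_equation (Q : ℝ → ℝ)
    (hQ : ∀ x, Q x = Real.sqrt (2 / 3) * Real.sin ((1 / 2) * Real.sqrt (3 / 2) * x)) :
    ∀ x : ℝ,
      Q x = 3 * Q x ^ 3 + 2 * Q x * deriv (deriv (fun y => Q y ^ 2)) x := by
  obtain rfl : Q = fun x => √(2 / 3) * sin (1 / 2 * √(3 / 2) * x) := funext hQ
  have ha : (1 / 2 * √(3 / 2)) ^ 2 = 3 / 8 := by
    rw [mul_pow, sq_sqrt (by norm_num)]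
    norm_num
  have hc : √(2 / 3) ^ 2 = 2 / 3 := sq_sqrt (by norm_num)
  exact sin_mul_solves_profile_equation (by rw [ha]; norm_num) (by rw [ha, hc]; norm_num)
end
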